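/- Suppose c ∈ Σℝ[X]² and g̃ ∈ M_{1,n−1}(ℝ[X]) satisfy that c·I_{n−1} − g̃ᵀg̃ is a sum of squares of matrix polynomials. Set v = 1 + c. Then for any u₁ ∈ T_S, the matrix v(1+v)·[[(1+u₁)², (1+u₁)g̃],[(1+u₁)g̃ᵀ, g̃ᵀg̃ + (1+u₁)²·I_{n−1}]] belongs to I_n + T_S^n. -/

import Mathlib

open MvPolynomial Matrix Finset

/-- `MSos P`: `P` is a finite sum of matrices of the form `Aᵀ * A`. -/
def MSos {d : ℕ} {ι : Type} [Fintype ι] [DecidableEq ι]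
    (P : Matrix ι ι (MvPolynomial (Fin d) ℝ)) : Prop :=
  P ∈ AddSubmonoid.closure {C : Matrix ι ι (MvPolynomial (Fin d) ℝ) | ∃ A, C = Aᵀ * A}

/-- `TS g f`: `f` lies in the preordering generated by `g 0, …, g (m-1)`. -/
def TS {d m : ℕ} (g : Fin m → MvPolynomial (Fin d) ℝ) (f : MvPolynomial (Fin d) ℝ) : Prop :=
  ∃ σ : (Fin m → Bool) → MvPolynomial (Fin d) ℝ,
    (∀ α, IsSumSq (σ α)) ∧ f = ∑ α : Fin m → Bool, σ α * ∏ i, if α i then g i else 1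

/-- `TSn g P`: matrix preordering generated by `g` in `Matrix ι ι ℝ[X]`. -/
def TSn {d m : ℕ} {ι : Type} [Fintype ι] [DecidableEq ι]
    (g : Fin m → MvPolynomial (Fin d) ℝ) (P : Matrix ι ι (MvPolynomial (Fin d) ℝ)) : Prop :=
  ∃ C : (Fin m → Bool) → Matrix ι ι (MvPolynomial (Fin d) ℝ),
    (∀ α, MSos (C α)) ∧ P = ∑ α : Fin m → Bool, (∏ i, if α i then g i else 1) • C α

/-- The basic closed semialgebraic set defined by `g`. -/
def KS {d m : ℕ} (g : Fin m → MvPolynomial (Fin d) ℝ) : Set (Fin d → ℝ) :=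
  {x | ∀ i, 0 ≤ eval x (g i)}

section Helpers

variable {d m : ℕ} {ι κ : Type} [Fintype ι] [DecidableEq ι] [Fintype κ] [DecidableEq κ]
variable {g : Fin m → MvPolynomial (Fin d) ℝ}

lemma msos_zero : MSos (0 : Matrix ι ι (MvPolynomial (Fin d) ℝ)) :=
  AddSubmonoid.zero_mem _

lemma msos_add {P Q : Matrix ι ι (MvPolynomial (Fin d) ℝ)} (hP : MSos P) (hQ : MSos Q) :
    MSos (P + Q) := AddSubmonoid.add_mem _ hP hQ

lemma msos_sq (A : Matrix ι ι (MvPolynomial (Fin d) ℝ)) : MSos (Aᵀ * A) :=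
  AddSubmonoid.subset_closure ⟨A, rfl⟩

lemma msos_one : MSos (1 : Matrix ι ι (MvPolynomial (Fin d) ℝ)) := by
  simpa using msos_sq (1 : Matrix ι ι (MvPolynomial (Fin d) ℝ))

lemma msos_smul {s : MvPolynomial (Fin d) ℝ} (hs : IsSumSq s)
    {P : Matrix ι ι (MvPolynomial (Fin d) ℝ)} (hP : MSos P) : MSos (s • P) := by
  induction hs with
  | zero => simpa using msos_zero
  | @sq_add a S hS ih =>
    rw [add_smul]
    refine msos_add ?_ ih
    refine AddSubmonoid.closure_induction (fun x hx => ?_) ?_ (fun x y _ _ hx hy => ?_) hP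
    · obtain ⟨A, rfl⟩ := hx
      have h : (a * a) • (Aᵀ * A) = (a • A)ᵀ * (a • A) := by
        simp [Matrix.transpose_smul, Matrix.smul_mul, Matrix.mul_smul, smul_smul]
      rw [h]; exact msos_sq _
    · simpa using (msos_zero (d := d) (ι := ι))
    · rw [smul_add]; exact msos_add hx hy

lemma msos_block_br {P : Matrix ι ι (MvPolynomial (Fin d) ℝ)} (hP : MSos P) :
    MSos (fromBlocks 0 0 0 P : Matrix (κ ⊕ ι) (κ ⊕ ι) (MvPolynomial (Fin d) ℝ)) := by
  refine AddSubmonoid.closure_induction (fun x hx => ?_) ?_ (fun x y _ _ hx hy => ?_) hP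
  · obtain ⟨A, rfl⟩ := hx
    have h : (fromBlocks 0 0 0 (Aᵀ * A) : Matrix (κ ⊕ ι) (κ ⊕ ι) (MvPolynomial (Fin d) ℝ))
        = (fromBlocks 0 0 0 A)ᵀ * (fromBlocks 0 0 0 A) := by
      simp [fromBlocks_transpose, fromBlocks_multiply]
    rw [h]; exact msos_sq _
  · simpa using (msos_zero (d := d) (ι := κ ⊕ ι))
  · have h : (fromBlocks 0 0 0 (x + y) : Matrix (κ ⊕ ι) (κ ⊕ ι) (MvPolynomial (Fin d) ℝ))
        = fromBlocks 0 0 0 x + fromBlocks 0 0 0 y := by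
      simp [fromBlocks_add]
    rw [h]; exact msos_add hx hy

lemma msos_block_tl {P : Matrix κ κ (MvPolynomial (Fin d) ℝ)} (hP : MSos P) :
    MSos (fromBlocks P 0 0 0 : Matrix (κ ⊕ ι) (κ ⊕ ι) (MvPolynomial (Fin d) ℝ)) := by
  refine AddSubmonoid.closure_induction (fun x hx => ?_) ?_ (fun x y _ _ hx hy => ?_) hP
  · obtain ⟨A, rfl⟩ := hx
    have h : (fromBlocks (Aᵀ * A) 0 0 0 : Matrix (κ ⊕ ι) (κ ⊕ ι) (MvPolynomial (Fin d) ℝ))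
        = (fromBlocks A 0 0 0)ᵀ * (fromBlocks A 0 0 0) := by
      simp [fromBlocks_transpose, fromBlocks_multiply]
    rw [h]; exact msos_sq _
  · simpa using (msos_zero (d := d) (ι := κ ⊕ ι))
  · have h : (fromBlocks (x + y) 0 0 0 : Matrix (κ ⊕ ι) (κ ⊕ ι) (MvPolynomial (Fin d) ℝ))
        = fromBlocks x 0 0 0 + fromBlocks y 0 0 0 := by
      simp [fromBlocks_add]
    rw [h]; exact msos_add hx hy

lemma isSumSq_mul' {s t : MvPolynomial (Fin d) ℝ} (hs : IsSumSq s) (ht : IsSumSq t) :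
    IsSumSq (s * t) := by
  induction hs with
  | zero => simpa using IsSumSq.zero
  | @sq_add a S hS ih =>
    rw [add_mul]
    refine IsSumSq.add ?_ ih
    clear ih hS
    induction ht with
    | zero => simpa using IsSumSq.zero
    | @sq_add b T hT ih2 =>
      have h : a * a * (b * b + T) = (a * b) * (a * b) + a * a * T := by ring
      rw [h]; exact IsSumSq.sq_add _ ih2

lemma isSumSq_sq (a : MvPolynomial (Fin d) ℝ) : IsSumSq (a ^ 2) := by
  have := IsSumSq.sq_add a IsSumSq.zero
  simpa [sq] using this

lemma isSumSq_one : IsSumSq (1 : MvPolynomial (Fin d) ℝ) := by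
  simpa using isSumSq_sq (1 : MvPolynomial (Fin d) ℝ)

lemma isSumSq_nat (k : ℕ) : IsSumSq ((k : ℕ) : MvPolynomial (Fin d) ℝ) := by
  induction k with
  | zero => simpa using IsSumSq.zero
  | succ k ih =>
    have h : ((k + 1 : ℕ) : MvPolynomial (Fin d) ℝ) = 1 * 1 + (k : ℕ) := by push_cast; ring
    rw [h]; exact IsSumSq.sq_add _ ih

lemma ts_add {f₁ f₂ : MvPolynomial (Fin d) ℝ} (h₁ : TS g f₁) (h₂ : TS g f₂) :
    TS g (f₁ + f₂) := by
  obtain ⟨σ₁, hσ₁, rfl⟩ := h₁; obtain ⟨σ₂, hσ₂, rfl⟩ := h₂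
  exact ⟨fun α => σ₁ α + σ₂ α, fun α => (hσ₁ α).add (hσ₂ α),
    by rw [← Finset.sum_add_distrib]; exact Finset.sum_congr rfl fun α _ => by ring⟩

lemma ts_of_sos {s : MvPolynomial (Fin d) ℝ} (hs : IsSumSq s) : TS g s := by
  refine ⟨fun α => if α = (fun _ => false) then s else 0,
    fun α => by by_cases h : α = fun _ => false <;> simp [h, hs, IsSumSq.zero], ?_⟩
  rw [Finset.sum_eq_single (fun _ => false)]
  · simp
  · intro b _ hb; simp [hb]
  · simp

lemma ts_mul_sos {s t : MvPolynomial (Fin d) ℝ} (hs : IsSumSq s) (ht : TS g t) :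
    TS g (s * t) := by
  obtain ⟨σ, hσ, rfl⟩ := ht
  exact ⟨fun α => s * σ α, fun α => isSumSq_mul' hs (hσ α),
    by rw [Finset.mul_sum]; exact Finset.sum_congr rfl fun α _ => by ring⟩

lemma tsn_add {P Q : Matrix ι ι (MvPolynomial (Fin d) ℝ)} (hP : TSn g P) (hQ : TSn g Q) :
    TSn g (P + Q) := by
  obtain ⟨C₁, hC₁, rfl⟩ := hP; obtain ⟨C₂, hC₂, rfl⟩ := hQ
  exact ⟨fun α => C₁ α + C₂ α, fun α => msos_add (hC₁ α) (hC₂ α),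
    by rw [← Finset.sum_add_distrib]; exact Finset.sum_congr rfl fun α _ => by rw [smul_add]⟩

lemma ts_smul_msos {f : MvPolynomial (Fin d) ℝ} (hf : TS g f)
    {P : Matrix ι ι (MvPolynomial (Fin d) ℝ)} (hP : MSos P) : TSn g (f • P) := by
  obtain ⟨σ, hσ, rfl⟩ := hf
  refine ⟨fun α => σ α • P, fun α => msos_smul (hσ α) hP, ?_⟩
  rw [Finset.sum_smul]
  exact Finset.sum_congr rfl fun α _ => by rw [smul_smul, mul_comm]

lemma msos_tsn {P : Matrix ι ι (MvPolynomial (Fin d) ℝ)} (hP : MSos P) : TSn g P := by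
  have h := ts_smul_msos (g := g) (ts_of_sos isSumSq_one) hP
  rwa [one_smul] at h

end Helpers

theorem stmt_14 {d m n : ℕ} (gs : Fin m → MvPolynomial (Fin d) ℝ)
    (c : MvPolynomial (Fin d) ℝ) (hc : IsSumSq c)
    (gt : Matrix (Fin 1) (Fin n) (MvPolynomial (Fin d) ℝ))
    (hg : MSos (c • (1 : Matrix (Fin n) (Fin n) (MvPolynomial (Fin d) ℝ)) - gtᵀ * gt))
    (v : MvPolynomial (Fin d) ℝ) (hv : v = 1 + c)
    (u₁ : MvPolynomial (Fin d) ℝ) (hu₁ : TS gs u₁) :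
    ∃ W : Matrix (Fin 1 ⊕ Fin n) (Fin 1 ⊕ Fin n) (MvPolynomial (Fin d) ℝ), TSn gs W ∧
      (v * (1 + v)) •
        fromBlocks ((1 + u₁) ^ 2 • (1 : Matrix (Fin 1) (Fin 1) (MvPolynomial (Fin d) ℝ)))
          ((1 + u₁) • gt) ((1 + u₁) • gtᵀ)
          (gtᵀ * gt + (1 + u₁) ^ 2 • (1 : Matrix (Fin n) (Fin n) (MvPolynomial (Fin d) ℝ))) =
      1 + W := by
  subst hv
  set A : Matrix (Fin 1 ⊕ Fin n) (Fin 1 ⊕ Fin n) (MvPolynomial (Fin d) ℝ) :=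
    fromBlocks (((1 + c) * (1 + u₁)) • (1 : Matrix (Fin 1) (Fin 1) (MvPolynomial (Fin d) ℝ)))
      ((2 + c) • gt) 0 0 with hA
  refine ⟨Aᵀ * A
      + (2 * u₁ + u₁ ^ 2 + c * (1 + u₁) ^ 2) •
          (fromBlocks 1 0 0 0 : Matrix (Fin 1 ⊕ Fin n) (Fin 1 ⊕ Fin n) (MvPolynomial (Fin d) ℝ))
      + fromBlocks 0 0 0
          ((2 + c) • (c • (1 : Matrix (Fin n) (Fin n) (MvPolynomial (Fin d) ℝ)) - gtᵀ * gt))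
      + ((1 + 2 * u₁ ^ 2 + c + 3 * c * u₁ ^ 2 + c ^ 2 * u₁ ^ 2)
          + (4 + 6 * c + 2 * c ^ 2) * u₁) •
          (fromBlocks 0 0 0 1 : Matrix (Fin 1 ⊕ Fin n) (Fin 1 ⊕ Fin n) (MvPolynomial (Fin d) ℝ)),
    ?_, ?_⟩
  · have h2 : IsSumSq (2 : MvPolynomial (Fin d) ℝ) := by
      have := isSumSq_nat (d := d) 2; norm_num at this; exact this
    have h3 : IsSumSq (3 : MvPolynomial (Fin d) ℝ) := by
      have := isSumSq_nat (d := d) 3; norm_num at this; exact this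
    have h4 : IsSumSq (4 : MvPolynomial (Fin d) ℝ) := by
      have := isSumSq_nat (d := d) 4; norm_num at this; exact this
    have h6 : IsSumSq (6 : MvPolynomial (Fin d) ℝ) := by
      have := isSumSq_nat (d := d) 6; norm_num at this; exact this
    refine tsn_add (tsn_add (tsn_add ?_ ?_) ?_) ?_
    · exact msos_tsn (msos_sq A)
    · refine ts_smul_msos ?_ (msos_block_tl msos_one)
      refine ts_add (ts_add (ts_mul_sos h2 hu₁) (ts_of_sos (isSumSq_sq u₁))) ?_
      exact ts_of_sos (isSumSq_mul' hc (isSumSq_sq (1 + u₁)))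
    · exact msos_tsn (msos_block_br (msos_smul (h2.add hc) hg))
    · refine ts_smul_msos ?_ (msos_block_br msos_one)
      refine ts_add (ts_of_sos ?_) (ts_mul_sos ?_ hu₁)
      · exact ((((isSumSq_one.add (isSumSq_mul' h2 (isSumSq_sq u₁))).add hc).add
          (isSumSq_mul' (isSumSq_mul' h3 hc) (isSumSq_sq u₁))).add
          (isSumSq_mul' (isSumSq_sq c) (isSumSq_sq u₁)))
      · exact (h4.add (isSumSq_mul' h6 hc)).add (isSumSq_mul' h2 (isSumSq_sq c))
  · rw [hA, ← fromBlocks_one]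
    simp only [fromBlocks_transpose, fromBlocks_multiply, fromBlocks_smul, fromBlocks_add,
      Matrix.transpose_smul, Matrix.transpose_zero, Matrix.transpose_one,
      Matrix.smul_mul, Matrix.mul_smul, Matrix.mul_one, Matrix.one_mul,
      Matrix.mul_zero, Matrix.zero_mul, add_zero, zero_add, smul_zero, smul_add, smul_sub]
    rw [fromBlocks_inj]
    refine ⟨?_, ?_, ?_, ?_⟩ <;> module
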